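/- Let k be a perfect field of characteristic p > 0 and let V be a k-vector space equipped with a Frobenius-semilinear endomorphism F. Assume V is finitely generated over the twisted polynomial ring k_σ[F] (there is a finite subset S ⊆ V whose F-iterates {F^n(s) : n ∈ ℕ, s ∈ S} span V over k) and torsion-free (for every nonzero v ∈ V the family (F^n(v))_{n∈ℕ} is k-linearly independent). Then V is free over k_σ[F]: there exists a finite subset B ⊆ V such that the family (F^n(b))_{n∈ℕ, b∈B} is a k-basis of V. -/

import Mathlib

/-!
Since `σ` is surjective, `k_σ[F]` has a left division algorithm: the leading coefficient of
`P · c Fᵈ` is `a σᵉ(c)` (`a` the leading coefficient, `e` the degree of `P`), which can be made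
equal to any nonzero scalar. Take a generating set `B` of minimal cardinality. A nontrivial
`k`-linear relation among the iterates of `B` is a relation `∑ P_b(F) b = 0`. Replacing a generator
`b` by `b + c Fᵈ b'` and `P_b'` by `P_b' - P_b · c Fᵈ` keeps both the generated submodule and the
relation while lowering the degree of `P_b'`, so eventually a single generator satisfies
`P(F) b = 0` with `P ≠ 0`. Torsion-freeness forces `b = 0`, and dropping `b` contradicts minimality.
-/

open Polynomial Function

section Iterates

variable {k V : Type*} [Field k] [AddCommGroup V] [Module k V] {σ : k →+* k}
  (f : V →ₛₗ[σ] V)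

lemma iterate_map_smulₛₗ (n : ℕ) (c : k) (v : V) : f^[n] (c • v) = (σ ^ n) c • f^[n] v := by
  induction n with
  | zero => simp
  | succ n ih => simp only [iterate_succ_apply', ih, map_smulₛₗ, RingHom.coe_pow]

/-- The `k_σ[F]`-submodule generated by `s`. -/
def iterSpan {ι : Type*} (s : ι → V) : Submodule k V :=
  Submodule.span k (Set.range fun q : ℕ × ι => f^[q.1] (s q.2))

variable {f} {ι κ : Type*} {s : ι → V}

lemma iterate_mem_iterSpan (n : ℕ) (i : ι) : f^[n] (s i) ∈ iterSpan f s :=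
  Submodule.subset_span ⟨(n, i), rfl⟩

lemma mem_iterSpan (i : ι) : s i ∈ iterSpan f s := iterate_mem_iterSpan 0 i

lemma map_mem_iterSpan {v : V} (hv : v ∈ iterSpan f s) : f v ∈ iterSpan f s := by
  induction hv using Submodule.span_induction with
  | mem x hx =>
    obtain ⟨⟨n, i⟩, rfl⟩ := hx
    simpa only [iterate_succ_apply'] using iterate_mem_iterSpan (f := f) (n + 1) i
  | zero => simp
  | add x y _ _ hx hy => simpa only [map_add] using add_mem hx hy
  | smul c x _ hx => simpa only [map_smulₛₗ] using Submodule.smul_mem _ _ hx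

lemma iterSpan_le_of_forall_mem {t : κ → V} (h : ∀ i, s i ∈ iterSpan f t) :
    iterSpan f s ≤ iterSpan f t := by
  rw [iterSpan, Submodule.span_le]
  rintro - ⟨⟨n, i⟩, rfl⟩
  induction n with
  | zero => exact h i
  | succ n ih =>
    change f^[n + 1] (s i) ∈ iterSpan f t
    rw [iterate_succ_apply']
    exact map_mem_iterSpan ih

lemma iterSpan_update_add_smul_iterate [DecidableEq ι] {i j : ι} (hij : i ≠ j) (c : k) (d : ℕ) :
    iterSpan f (update s i (s i + c • f^[d] (s j))) = iterSpan f s := by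
  set s' := update s i (s i + c • f^[d] (s j))
  have hs'j : s' j = s j := update_of_ne hij.symm _ _
  apply le_antisymm <;> refine iterSpan_le_of_forall_mem fun l => ?_
  · rcases eq_or_ne l i with rfl | hl
    · simpa only [s', update_self] using
        add_mem (mem_iterSpan l) (Submodule.smul_mem _ c (iterate_mem_iterSpan d j))
    · simpa only [s', update_of_ne hl] using mem_iterSpan (f := f) l
  · rcases eq_or_ne l i with rfl | hl
    · have : s l = s' l - c • f^[d] (s' j) := by simp [s', hs'j]
      rw [this]
      exact sub_mem (mem_iterSpan l) (Submodule.smul_mem _ c (iterate_mem_iterSpan d j))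
    · rw [← update_of_ne hl (s i + c • f^[d] (s j)) s]
      exact mem_iterSpan l

end Iterates

section TwistedPolynomials

variable {k V : Type*} [Field k] [AddCommGroup V] [Module k V] {σ : k →+* k}

/-- `P(F) v = ∑ aₙ • F^[n] v` for `P = ∑ aₙ Xⁿ`. An element `∑ aₙ Fⁿ` of `k_σ[F]` is stored as
the ordinary polynomial `∑ aₙ Xⁿ`; the multiplication of `k[X]` is never used as that of
`k_σ[F]`, except for right multiplication by powers of `X`. -/
noncomputable def iterEval (f : V →ₛₗ[σ] V) (v : V) : k[X] →ₗ[k] V :=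
  lsum fun n => LinearMap.toSpanSingleton k V (f^[n] v)

/-- The product `P · c` in `k_σ[F]`, where `Fⁿ c = σⁿ(c) Fⁿ`. -/
noncomputable def twistMulC (σ : k →+* k) (P : k[X]) (c : k) : k[X] :=
  P.sum fun n a => monomial n (a * (σ ^ n) c)

variable {f : V →ₛₗ[σ] V} {v : V} {P : k[X]} {c : k}

lemma iterEval_apply : iterEval f v P = P.sum fun n a => a • f^[n] v := by
  simp only [iterEval, lsum_apply, LinearMap.toSpanSingleton_apply]

lemma iterEval_monomial (n : ℕ) (a : k) : iterEval f v (monomial n a) = a • f^[n] v := by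
  rw [iterEval_apply, sum_monomial_index _ _ (zero_smul k _)]

lemma iterEval_add_right (w : V) : iterEval f (v + w) P = iterEval f v P + iterEval f w P := by
  simp only [iterEval_apply, iterate_map_add, smul_add, sum_add]

lemma iterEval_mul_X_pow (d : ℕ) : iterEval f v (P * X ^ d) = iterEval f (f^[d] v) P := by
  induction P using Polynomial.induction_on' with
  | add P Q hP hQ => rw [add_mul, map_add, map_add, hP, hQ]
  | monomial n a => rw [monomial_mul_X_pow, iterEval_monomial, iterEval_monomial,
      iterate_add_apply]

lemma iterEval_twistMulC : iterEval f v (twistMulC σ P c) = iterEval f (c • v) P := by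
  simp only [twistMulC, Polynomial.sum_def, map_sum, iterEval_monomial]
  simp only [iterEval_apply, Polynomial.sum_def, iterate_map_smulₛₗ, mul_smul]

lemma eq_zero_of_iterEval_eq_zero (hv : LinearIndependent k fun n => f^[n] v)
    (hP : iterEval f v P = 0) : P = 0 := by
  rw [iterEval_apply, Polynomial.sum_def] at hP
  ext n
  by_cases hn : n ∈ P.support
  · exact linearIndependent_iff'.mp hv _ _ hP n hn
  · exact notMem_support_iff.mp hn

lemma coeff_twistMulC (n : ℕ) : (twistMulC σ P c).coeff n = P.coeff n * (σ ^ n) c := by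
  simp only [twistMulC, Polynomial.sum_def, finsetSum_coeff, coeff_monomial, Finset.sum_ite_eq']
  split_ifs with h
  · rfl
  · rw [notMem_support_iff.mp h, zero_mul]

lemma support_twistMulC (hc : c ≠ 0) : (twistMulC σ P c).support = P.support := by
  ext n
  simp only [mem_support_iff, coeff_twistMulC, ne_eq, mul_eq_zero, map_eq_zero, hc, or_false]

lemma degree_twistMulC (hc : c ≠ 0) : (twistMulC σ P c).degree = P.degree := by
  simp only [degree, support_twistMulC hc]

lemma leadingCoeff_twistMulC (hc : c ≠ 0) :
    (twistMulC σ P c).leadingCoeff = P.leadingCoeff * (σ ^ P.natDegree) c := by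
  rw [leadingCoeff, natDegree_eq_of_degree_eq (degree_twistMulC hc), coeff_twistMulC,
    coeff_natDegree]

lemma exists_degree_sub_twistMulC_mul_X_pow_lt (hσ : Surjective σ) {Q : k[X]} (hP : P ≠ 0)
    (hQ : Q ≠ 0) (hPQ : P.degree ≤ Q.degree) :
    ∃ (c : k) (d : ℕ), (Q - twistMulC σ P c * X ^ d).degree < Q.degree := by
  obtain ⟨c, hc⟩ : ∃ c, (σ ^ P.natDegree) c = Q.leadingCoeff / P.leadingCoeff := by
    rw [RingHom.coe_pow]; exact hσ.iterate _ _
  have hc0 : c ≠ 0 := by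
    rintro rfl
    rw [map_zero, eq_comm, div_eq_zero_iff, leadingCoeff_eq_zero, leadingCoeff_eq_zero] at hc
    exact hc.elim hQ hP
  refine ⟨c, Q.natDegree - P.natDegree, degree_sub_lt_left ?_ hQ ?_⟩
  · rw [degree_mul_X_pow, degree_twistMulC hc0, degree_eq_natDegree hP, degree_eq_natDegree hQ]
    norm_cast
    rw [Nat.add_sub_cancel' (natDegree_le_natDegree hPQ)]
  · rw [leadingCoeff_mul_X_pow, leadingCoeff_twistMulC hc0, hc,
      mul_div_cancel₀ _ (leadingCoeff_ne_zero.mpr hP)]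

end TwistedPolynomials

section Relations

variable {k V ι : Type*} [Field k] [AddCommGroup V] [Module k V] {σ : k →+* k}
  {f : V →ₛₗ[σ] V} [Fintype ι] [DecidableEq ι]

lemma sum_iterEval_update (s : ι → V) (P : ι → k[X]) {i j : ι} (hij : i ≠ j) (c : k) (d : ℕ) :
    ∑ l, iterEval f (update s i (s i + c • f^[d] (s j)) l)
        (update P j (P j - twistMulC σ (P i) c * X ^ d) l) =
      ∑ l, iterEval f (s l) (P l) := by
  set A := iterEval f (c • f^[d] (s j)) (P i)
  have hA : iterEval f (s j) (twistMulC σ (P i) c * X ^ d) = A := by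
    rw [iterEval_mul_X_pow, iterEval_twistMulC]
  have key : ∀ l, iterEval f (update s i (s i + c • f^[d] (s j)) l)
      (update P j (P j - twistMulC σ (P i) c * X ^ d) l) =
        iterEval f (s l) (P l) + (if l = i then A else 0) - (if l = j then A else 0) := by
    intro l
    rcases eq_or_ne l i with rfl | hli
    · simp [hij, iterEval_add_right, A]
    rcases eq_or_ne l j with rfl | hlj
    · simp [hli, hA]
    · simp [hli, hlj]
  simp only [key, Finset.sum_sub_distrib, Finset.sum_add_distrib, Finset.sum_ite_eq',
    Finset.mem_univ, if_true, add_sub_cancel_right]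

lemma exists_relation_degree_lt (hσ : Surjective σ) (s : ι → V) (P : ι → k[X]) {i j : ι}
    (hij : i ≠ j) (hPi : P i ≠ 0) (hPj : P j ≠ 0) :
    ∃ (s' : ι → V) (P' : ι → k[X]), iterSpan f s' = iterSpan f s ∧ P' ≠ 0 ∧
      ∑ l, iterEval f (s' l) (P' l) = ∑ l, iterEval f (s l) (P l) ∧
      degree ∘ P' < degree ∘ P := by
  wlog hPij : (P i).degree ≤ (P j).degree generalizing i j
  · exact this hij.symm hPj hPi (le_of_not_ge hPij)
  obtain ⟨c, d, hdeg⟩ := exists_degree_sub_twistMulC_mul_X_pow_lt hσ hPi hPj hPij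
  refine ⟨update s i (s i + c • f^[d] (s j)), update P j (P j - twistMulC σ (P i) c * X ^ d),
    iterSpan_update_add_smul_iterate hij c d, fun h => hPi ?_, sum_iterEval_update s P hij c d, ?_⟩
  · simpa [hij] using congr_fun h i
  · rwa [comp_update, update_lt_self_iff]

theorem exists_iterSpan_eq_and_iterEval_eq_zero (hσ : Surjective σ) (s : ι → V) (P : ι → k[X])
    (hP : P ≠ 0) (hrel : ∑ l, iterEval f (s l) (P l) = 0) :
    ∃ t : ι → V, iterSpan f t = iterSpan f s ∧ ∃ j, ∃ Q ≠ 0, iterEval f (t j) Q = 0 := by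
  induction P using (InvImage.wf (fun P : ι → k[X] => degree ∘ P) wellFounded_lt).induction
    generalizing s with
  | _ P ih =>
  by_cases htwo : ∃ i j, i ≠ j ∧ P i ≠ 0 ∧ P j ≠ 0
  · obtain ⟨i, j, hij, hPi, hPj⟩ := htwo
    obtain ⟨s', P', hspan, hP', hsum, hlt⟩ := exists_relation_degree_lt hσ s P hij hPi hPj
    obtain ⟨t, ht, htor⟩ := ih P' hlt s' hP' (hsum.trans hrel)
    exact ⟨t, ht.trans hspan, htor⟩
  · obtain ⟨i, hi⟩ := Function.ne_iff.mp hP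
    have hsum : ∑ l, iterEval f (s l) (P l) = iterEval f (s i) (P i) :=
      Finset.sum_eq_single i (fun l _ hli => by
        by_contra h
        exact htwo ⟨l, i, hli, fun h0 => h (by rw [h0, map_zero]), hi⟩) (by simp)
    exact ⟨s, rfl, i, P i, hi, hsum ▸ hrel⟩

end Relations

section Freeness

variable {k V : Type*} [Field k] [AddCommGroup V] [Module k V] {σ : k →+* k}
  {f : V →ₛₗ[σ] V}

lemma exists_iterEval_relation_of_not_linearIndependent {ι : Type*} [Fintype ι] [DecidableEq ι]
    {s : ι → V} (h : ¬LinearIndependent k fun q : ℕ × ι => f^[q.1] (s q.2)) :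
    ∃ P : ι → k[X], P ≠ 0 ∧ ∑ l, iterEval f (s l) (P l) = 0 := by
  obtain ⟨S, g, hsum, q₀, hq₀, hg⟩ := not_linearIndependent_iff.mp h
  refine ⟨fun l => ∑ q ∈ S with q.2 = l, monomial q.1 (g q), fun hP => hg ?_, ?_⟩
  · have hcoeff : (∑ q ∈ S with q.2 = q₀.2, monomial q.1 (g q)).coeff q₀.1 = g q₀ := by
      rw [finsetSum_coeff, Finset.sum_eq_single q₀]
      · exact coeff_monomial_same _ _
      · intro q hq hne
        exact coeff_monomial_of_ne _ fun h1 => hne (Prod.ext h1.symm (Finset.mem_filter.mp hq).2)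
      · exact fun h => (h (Finset.mem_filter.mpr ⟨hq₀, rfl⟩)).elim
    rw [← hcoeff, congr_fun hP q₀.2, Pi.zero_apply, coeff_zero]
  · rw [← hsum, ← S.sum_fiberwise Prod.snd]
    refine Finset.sum_congr rfl fun l _ => ?_
    rw [map_sum]
    refine Finset.sum_congr rfl fun q hq => ?_
    rw [iterEval_monomial, (Finset.mem_filter.mp hq).2]

theorem linearIndependent_iterate_of_minimal_card (hσ : Surjective σ)
    (htf : ∀ v : V, v ≠ 0 → LinearIndependent k fun n => f^[n] v) (B : Finset V)
    (hB : ∀ C : Finset V, iterSpan f ((↑) : C → V) = iterSpan f ((↑) : B → V) → B.card ≤ C.card) :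
    LinearIndependent k fun q : ℕ × B => f^[q.1] q.2 := by
  classical
  by_contra h
  obtain ⟨P, hP, hrel⟩ := exists_iterEval_relation_of_not_linearIndependent h
  obtain ⟨t, ht, j, Q, hQ, htQ⟩ := exists_iterSpan_eq_and_iterEval_eq_zero hσ _ P hP hrel
  have htj : t j = 0 := by
    by_contra htj
    exact hQ (eq_zero_of_iterEval_eq_zero (htf _ htj) htQ)
  set C := (Finset.univ.erase j).image t
  have hC : iterSpan f ((↑) : C → V) = iterSpan f t := by
    apply le_antisymm <;> refine iterSpan_le_of_forall_mem fun l => ?_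
    · obtain ⟨i, -, hi⟩ := Finset.mem_image.mp l.2
      exact hi ▸ mem_iterSpan i
    · rcases eq_or_ne l j with rfl | hl
      · exact htj ▸ zero_mem _
      · exact mem_iterSpan (s := ((↑) : C → V))
          ⟨t l, Finset.mem_image_of_mem t (Finset.mem_erase.mpr ⟨hl, Finset.mem_univ l⟩)⟩
  have hcard : C.card < B.card :=
    (Finset.card_image_le.trans_lt (Finset.card_erase_lt_of_mem (Finset.mem_univ j))).trans_eq
      (by rw [Finset.card_univ, Fintype.card_coe])
  exact hcard.not_ge (hB C (hC.trans ht))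

end Freeness

theorem stmt_4 (p : ℕ) [Fact p.Prime] (k : Type*) [Field k] [CharP k p] [PerfectRing k p]
    (V : Type*) [AddCommGroup V] [Module k V]
    (F : V → V)
    (hFadd : ∀ x y : V, F (x + y) = F x + F y)
    (hFsmul : ∀ (c : k) (v : V), F (c • v) = c ^ p • F v)
    (hfg : ∃ S : Finset V,
      Submodule.span k (Set.range fun ns : ℕ × S => F^[ns.1] (ns.2 : V)) = ⊤)
    (htf : ∀ v : V, v ≠ 0 → LinearIndependent k fun n : ℕ => F^[n] v) :
    ∃ B : Finset V,
      LinearIndependent k (fun nb : ℕ × B => F^[nb.1] (nb.2 : V)) ∧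
      Submodule.span k (Set.range fun nb : ℕ × B => F^[nb.1] (nb.2 : V)) = ⊤ := by
  let f : V →ₛₗ[frobenius k p] V :=
    { toFun := F, map_add' := hFadd, map_smul' := fun c v => (hFsmul c v).trans rfl }
  obtain ⟨B, hB, hmin⟩ := (measure Finset.card).wf.has_min
    {B : Finset V | iterSpan f ((↑) : B → V) = ⊤} hfg
  exact ⟨B, linearIndependent_iterate_of_minimal_card (f := f) (surjective_frobenius k p) htf B
    fun C hC => not_lt.mp (hmin C (hC.trans hB)), hB⟩
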